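/- arXiv:2108.06236 — 3 statements merged into one kernel-verified Lean document; each statement's English description precedes it below -/
import Mathlib

section
/- Let p > 3 be prime. An element (x, y) ∈ ℤ/6 × ℤ/(2p^2) satisfies p^2·x^2 + 3·y^2 ≡ 0 (mod 12p^2) if and only if there exists an integer k with (x, y) = (0, 2kp) or (x, y) = (3, (2k+1)p) in ℤ/6 × ℤ/(2p^2). -/
/-!
Modulo `p ^ 2` the condition leaves `p ^ 2 ∣ 3 * y ^ 2`, and since `3` is squarefree this forces
`y = p * m`. Dividing by `p ^ 2` turns the condition into `x ^ 2 + 3 * m ^ 2 ≡ 0 [ZMOD 12]`, which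
for `x` modulo `6` holds exactly when `x = 0` with `m` even or `x = 3` with `m` odd.
-/

theorem Prime.dvd_of_sq_dvd_mul_sq {R : Type*} [CommRing R] [IsDomain R] [IsBezout R]
    {p c y : R} (hp : Prime p) (hc : Squarefree c) (h : p ^ 2 ∣ c * y ^ 2) : p ∣ y := by
  by_contra hy
  have hcop : IsCoprime (p ^ 2) (y ^ 2) := (hp.coprime_iff_not_dvd.2 hy).pow
  exact hp.not_isUnit (hc p (sq p ▸ hcop.dvd_of_dvd_mul_right h))

theorem Int.mul_sq_dvd_sq_mul_sq_add_three_mul_sq_iff {p : ℤ} (hp : Prime p) (a x y : ℤ) :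
    a * p ^ 2 ∣ p ^ 2 * x ^ 2 + 3 * y ^ 2 ↔ ∃ m, y = p * m ∧ a ∣ x ^ 2 + 3 * m ^ 2 := by
  have hfactor (m : ℤ) : p ^ 2 * x ^ 2 + 3 * (p * m) ^ 2 = (x ^ 2 + 3 * m ^ 2) * p ^ 2 := by ring
  constructor
  · intro h
    have hy : p ^ 2 ∣ 3 * y ^ 2 :=
      (dvd_add_right (dvd_mul_right _ _)).1 ((dvd_mul_left _ _).trans h)
    obtain ⟨m, rfl⟩ := hp.dvd_of_sq_dvd_mul_sq Int.prime_three.squarefree hy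
    rw [hfactor, mul_dvd_mul_iff_right (pow_ne_zero 2 hp.ne_zero)] at h
    exact ⟨m, rfl, h⟩
  · rintro ⟨m, rfl, h⟩
    rw [hfactor]
    exact mul_dvd_mul_right h _

theorem ZMod.twelve_dvd_val_sq_add_three_mul_sq_iff (a : ZMod 6) (m : ℤ) :
    (12 : ℤ) ∣ (a.val : ℤ) ^ 2 + 3 * m ^ 2 ↔
      (a = 0 ∧ m ≡ 0 [ZMOD 2]) ∨ (a = 3 ∧ m ≡ 1 [ZMOD 2]) := by
  have key : ∀ a : ZMod 6,
      (12 ∣ (a.val : ℤ) ^ 2 ↔ a = 0) ∧ (12 ∣ (a.val : ℤ) ^ 2 + 3 ↔ a = 3) := by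
    decide
  obtain ⟨k, rfl | rfl⟩ := Int.even_or_odd' m
  · rw [show (a.val : ℤ) ^ 2 + 3 * (2 * k) ^ 2 = a.val ^ 2 + 12 * k ^ 2 by ring,
      dvd_add_left (dvd_mul_right _ _), (key a).1]
    simp [Int.ModEq]
  · rw [show (a.val : ℤ) ^ 2 + 3 * (2 * k + 1) ^ 2 = a.val ^ 2 + 3 + 12 * (k ^ 2 + k) by ring,
      dvd_add_left (dvd_mul_right _ _), (key a).2]
    simp [Int.ModEq]

theorem ZMod.exists_val_eq_mul_modEq_two_iff {n : ℕ} [NeZero n] {p : ℤ} (hpn : 2 * p ∣ n)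
    (y : ZMod n) (r : ℤ) :
    (∃ m, (y.val : ℤ) = p * m ∧ m ≡ r [ZMOD 2]) ↔ ∃ k : ℤ, y = ((2 * k + r) * p : ℤ) := by
  constructor
  · rintro ⟨m, hy, hm⟩
    obtain ⟨k, hk⟩ := Int.modEq_iff_dvd.1 hm.symm
    refine ⟨k, ?_⟩
    rw [← ZMod.natCast_zmod_val y, ← Int.cast_natCast, hy, show m = 2 * k + r by omega,
      mul_comm]
  · rintro ⟨k, rfl⟩
    obtain ⟨t, ht⟩ := hpn
    -- `y.val = a - n * (a / n)` for `a = (2 * k + r) * p`, and `n = 2 * p * t`.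
    refine ⟨2 * k + r - 2 * t * ((2 * k + r) * p / n), ?_, ?_⟩
    · rw [ZMod.val_intCast, Int.emod_def, ht]
      ring
    · exact Int.modEq_iff_dvd.2 ⟨t * ((2 * k + r) * p / n) - k, by ring⟩

theorem stmt_2_general (p : ℕ) (hp : p.Prime)
    (z : ZMod 6 × ZMod (2 * p ^ 2)) :
    ((p : ℤ) ^ 2 * (z.1.val : ℤ) ^ 2 + 3 * (z.2.val : ℤ) ^ 2 ≡ 0 [ZMOD (12 * (p : ℤ) ^ 2)]) ↔
      ∃ k : ℤ, (z.1 = 0 ∧ z.2 = 2 * (k : ZMod (2 * p ^ 2)) * (p : ZMod (2 * p ^ 2))) ∨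
        (z.1 = 3 ∧ z.2 = (2 * (k : ZMod (2 * p ^ 2)) + 1) * (p : ZMod (2 * p ^ 2))) := by
  have : NeZero (2 * p ^ 2) := ⟨by positivity [hp.pos]⟩
  have hpn : 2 * (p : ℤ) ∣ ((2 * p ^ 2 : ℕ) : ℤ) := ⟨p, by push_cast; ring⟩
  rw [Int.modEq_zero_iff_dvd, Int.mul_sq_dvd_sq_mul_sq_add_three_mul_sq_iff
    (Nat.prime_iff_prime_int.1 hp)]
  simp_rw [ZMod.twelve_dvd_val_sq_add_three_mul_sq_iff, and_or_left, exists_or,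
    and_left_comm (b := z.1 = _), exists_and_left, ZMod.exists_val_eq_mul_modEq_two_iff hpn,
    ← exists_and_left, ← exists_or]
  push_cast
  simp only [add_zero]

theorem stmt_2 (p : ℕ) (hp : p.Prime) (hp3 : 3 < p)
    (z : ZMod 6 × ZMod (2 * p ^ 2)) :
    ((p : ℤ) ^ 2 * (z.1.val : ℤ) ^ 2 + 3 * (z.2.val : ℤ) ^ 2 ≡ 0 [ZMOD (12 * (p : ℤ) ^ 2)]) ↔
      ∃ k : ℤ, (z.1 = 0 ∧ z.2 = 2 * (k : ZMod (2 * p ^ 2)) * (p : ZMod (2 * p ^ 2))) ∨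
        (z.1 = 3 ∧ z.2 = (2 * (k : ZMod (2 * p ^ 2)) + 1) * (p : ZMod (2 * p ^ 2))) :=
  stmt_2_general p hp z
end

section
/- Let p > 3 be prime. The number of isotropic elements of the discriminant group D(L_{2p^2}) ≅ ℤ/6 × ℤ/(2p^2) (with quadratic form q(x,y) = -x^2/6 - y^2/(2p^2) mod 2ℤ) is exactly 2p: namely p elements of the form (0, 2kp) for k = 0, …, p-1 and p elements of the form (3, (2k+1)p) for k = 0, …, p-1. -/
/-!
If `12 p² ∣ p² a² + 3 b²` then `3 ∣ a` and `p ∣ b`, because `p` is a prime different from `3`.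
Writing `a = 3c` and `b = m p`, the condition becomes `4 ∣ 3c² + m²`, i.e. `c ≡ m (mod 2)`.
For `a = x.val < 6` and `b = y.val < 2p²` this leaves `c ∈ {0, 1}` and `m < 2p`, hence `p`
isotropic elements with `m` even and `p` with `m` odd.
-/

lemma four_dvd_three_mul_sq_add_sq_iff (c m : ℕ) : 4 ∣ 3 * c ^ 2 + m ^ 2 ↔ c % 2 = m % 2 := by
  obtain ⟨q, rfl | rfl⟩ := Nat.even_or_odd' c <;> obtain ⟨r, rfl | rfl⟩ := Nat.even_or_odd' m <;>
    ring_nf <;> omega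

lemma twelve_mul_sq_dvd_iff {p : ℕ} (hp : p ≠ 0) (c m : ℕ) :
    12 * p ^ 2 ∣ p ^ 2 * (3 * c) ^ 2 + 3 * (m * p) ^ 2 ↔ c % 2 = m % 2 := by
  rw [show p ^ 2 * (3 * c) ^ 2 + 3 * (m * p) ^ 2 = 3 * p ^ 2 * (3 * c ^ 2 + m ^ 2) by ring,
    show 12 * p ^ 2 = 3 * p ^ 2 * 4 by ring, Nat.mul_dvd_mul_iff_left (by positivity),
    four_dvd_three_mul_sq_add_sq_iff]

lemma twelve_mul_sq_dvd_iff_exists {p : ℕ} (hp : p.Prime) (hp3 : p ≠ 3) (a b : ℕ) :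
    12 * p ^ 2 ∣ p ^ 2 * a ^ 2 + 3 * b ^ 2 ↔ ∃ c m, a = 3 * c ∧ b = m * p ∧ c % 2 = m % 2 := by
  constructor
  · intro h
    have hcop : Nat.Coprime 3 p := (Nat.coprime_primes Nat.prime_three hp).2 hp3.symm
    have h3a : 3 ∣ a := by
      have : 3 ∣ p ^ 2 * a ^ 2 := (Nat.dvd_add_left (dvd_mul_right 3 _)).1
        ((Dvd.intro (4 * p ^ 2) (by ring)).trans h)
      exact Nat.prime_three.dvd_of_dvd_pow ((hcop.pow_right 2).dvd_of_dvd_mul_left this)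
    have hpb : p ∣ b := by
      have : p ∣ 3 * b ^ 2 := (Nat.dvd_add_right ((dvd_pow_self p two_ne_zero).mul_right _)).1
        ((Dvd.intro (12 * p) (by ring)).trans h)
      exact hp.dvd_of_dvd_pow (hcop.symm.dvd_of_dvd_mul_left this)
    obtain ⟨c, rfl⟩ := h3a
    obtain ⟨m, rfl⟩ := hpb
    rw [mul_comm p m] at h ⊢
    exact ⟨c, m, rfl, rfl, (twelve_mul_sq_dvd_iff hp.ne_zero c m).1 h⟩
  · rintro ⟨c, m, rfl, rfl, hcm⟩
    exact (twelve_mul_sq_dvd_iff hp.ne_zero c m).2 hcm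

def IsIsotropic (p : ℕ) (z : ZMod 6 × ZMod (2 * p ^ 2)) : Prop :=
  (p : ℤ) ^ 2 * (z.1.val : ℤ) ^ 2 + 3 * (z.2.val : ℤ) ^ 2 ≡ 0 [ZMOD (12 * (p : ℤ) ^ 2)]

def isotropicEven (p k : ℕ) : ZMod 6 × ZMod (2 * p ^ 2) :=
  (0, ((2 * k * p : ℕ) : ZMod (2 * p ^ 2)))

def isotropicOdd (p k : ℕ) : ZMod 6 × ZMod (2 * p ^ 2) :=
  (3, (((2 * k + 1) * p : ℕ) : ZMod (2 * p ^ 2)))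

lemma isIsotropic_iff (p : ℕ) (z : ZMod 6 × ZMod (2 * p ^ 2)) :
    IsIsotropic p z ↔ 12 * p ^ 2 ∣ p ^ 2 * z.1.val ^ 2 + 3 * z.2.val ^ 2 := by
  rw [IsIsotropic, Int.modEq_zero_iff_dvd]
  norm_cast

lemma mul_lt_two_mul_sq_iff {m p : ℕ} : m * p < 2 * p ^ 2 ↔ m < 2 * p := by
  rw [sq, ← mul_assoc]
  exact ⟨fun h => lt_of_mul_lt_mul_right h p.zero_le,
    fun h => Nat.mul_lt_mul_of_pos_right h (by omega)⟩

lemma isotropicEven_snd_val {p k : ℕ} (hk : k < p) : (isotropicEven p k).2.val = 2 * k * p :=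
  ZMod.val_natCast_of_lt (mul_lt_two_mul_sq_iff.2 (by omega))

lemma isotropicOdd_snd_val {p k : ℕ} (hk : k < p) :
    (isotropicOdd p k).2.val = (2 * k + 1) * p :=
  ZMod.val_natCast_of_lt (mul_lt_two_mul_sq_iff.2 (by omega))

lemma isIsotropic_iff_mem {p : ℕ} (hp : p.Prime) (hp3 : p ≠ 3) (z : ZMod 6 × ZMod (2 * p ^ 2)) :
    IsIsotropic p z ↔ z ∈ isotropicEven p '' Set.Iio p ∪ isotropicOdd p '' Set.Iio p := by
  have : NeZero (2 * p ^ 2) := ⟨by positivity [hp.pos]⟩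
  rw [isIsotropic_iff, twelve_mul_sq_dvd_iff_exists hp hp3]
  constructor
  · rintro ⟨c, m, ha, hb, hcm⟩
    have hc : c < 2 := by have := z.1.val_lt; omega
    have hm : m < 2 * p := mul_lt_two_mul_sq_iff.1 (hb ▸ z.2.val_lt)
    have hz : z = (((3 * c : ℕ) : ZMod 6), ((m * p : ℕ) : ZMod (2 * p ^ 2))) := by
      rw [← ha, ← hb, ZMod.natCast_zmod_val, ZMod.natCast_zmod_val]
    obtain ⟨k, rfl | rfl⟩ := Nat.even_or_odd' m
    · refine Or.inl ⟨k, Set.mem_Iio.2 (by omega), ?_⟩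
      rw [hz, isotropicEven, show c = 0 by omega]
      simp [mul_assoc]
    · refine Or.inr ⟨k, Set.mem_Iio.2 (by omega), ?_⟩
      rw [hz, isotropicOdd, show c = 1 by omega]
      simp
  · rintro (⟨k, hk, rfl⟩ | ⟨k, hk, rfl⟩)
    · exact ⟨0, 2 * k, rfl, isotropicEven_snd_val hk, by omega⟩
    · exact ⟨1, 2 * k + 1, rfl, isotropicOdd_snd_val hk, by omega⟩

lemma injOn_isotropicEven (p : ℕ) : (Set.Iio p).InjOn (isotropicEven p) := by
  intro k hk l hl h
  have h2 := congrArg (·.2.val) h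
  simp only [isotropicEven_snd_val hk, isotropicEven_snd_val hl] at h2
  have := Nat.eq_of_mul_eq_mul_right (Nat.zero_lt_of_lt hk) h2
  omega

lemma injOn_isotropicOdd (p : ℕ) : (Set.Iio p).InjOn (isotropicOdd p) := by
  intro k hk l hl h
  have h2 := congrArg (·.2.val) h
  simp only [isotropicOdd_snd_val hk, isotropicOdd_snd_val hl] at h2
  have := Nat.eq_of_mul_eq_mul_right (Nat.zero_lt_of_lt hk) h2
  omega

lemma ncard_isotropicEven_union_isotropicOdd (p : ℕ) :
    (isotropicEven p '' Set.Iio p ∪ isotropicOdd p '' Set.Iio p).ncard = 2 * p := by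
  have hdisj : Disjoint (isotropicEven p '' Set.Iio p) (isotropicOdd p '' Set.Iio p) := by
    rw [Set.disjoint_left]
    rintro _ ⟨k, -, rfl⟩ ⟨l, -, h⟩
    exact (by decide : (3 : ZMod 6) ≠ 0) (congrArg Prod.fst h)
  rw [Set.ncard_union_eq hdisj ((Set.finite_Iio p).image _) ((Set.finite_Iio p).image _),
    (injOn_isotropicEven p).ncard_image, (injOn_isotropicOdd p).ncard_image, Set.ncard_Iio_nat]
  ring

theorem stmt_4 (p : ℕ) (hp : p.Prime) (hp3 : 3 < p) :
    {z : ZMod 6 × ZMod (2 * p ^ 2) |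
        (p : ℤ) ^ 2 * (z.1.val : ℤ) ^ 2 + 3 * (z.2.val : ℤ) ^ 2 ≡ 0 [ZMOD (12 * (p : ℤ) ^ 2)]} =
      (fun k : ℕ => ((0 : ZMod 6), ((2 * k * p : ℕ) : ZMod (2 * p ^ 2)))) '' (Set.Iio p) ∪
      (fun k : ℕ => ((3 : ZMod 6), (((2 * k + 1) * p : ℕ) : ZMod (2 * p ^ 2)))) '' (Set.Iio p) ∧
    {z : ZMod 6 × ZMod (2 * p ^ 2) |
        (p : ℤ) ^ 2 * (z.1.val : ℤ) ^ 2 + 3 * (z.2.val : ℤ) ^ 2 ≡ 0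
          [ZMOD (12 * (p : ℤ) ^ 2)]}.ncard = 2 * p := by
  have hS : {z | IsIsotropic p z} = isotropicEven p '' Set.Iio p ∪ isotropicOdd p '' Set.Iio p :=
    Set.ext (isIsotropic_iff_mem hp hp3.ne')
  exact ⟨hS, (congrArg Set.ncard hS).trans (ncard_isotropicEven_union_isotropicOdd p)⟩
end

section
/- Let L = 2U ⊕ ⟨-2p²⟩ ⊕ ⟨-6⟩ for p > 3 prime, with basis e₁,f₁,e₂,f₂ (canonical hyperbolic bases) and generators v of ⟨-2p²⟩, w of ⟨-6⟩. Then the vector u = 2p·e₁ + 2p·v₃·e₂ + 2p·v₄·f₂ + p·w + (2k+1)·v, with gcd(2k+1, p) = 1, is primitive in L and has divisor div(u) = 2p (the ideal (u, L) is generated by 2p). -/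
/-!
The coordinates `p` and `2k + 1` of `u` (along `w` and `v`) are coprime, so `u` is primitive.
Pairing `u` with a lattice vector multiplies its coordinates by `1` (hyperbolic part), `-6` (along `w`)
or `-2p²` (along `v`), so every product is divisible by `2p`, and `(u, f₁) = 2p` shows that `2p`
is attained.
-/

open Matrix

/-- The Gram matrix of `L_{2p²} = 2U ⊕ ⟨-6⟩ ⊕ ⟨-2p²⟩` on the ordered basis
`e₁, f₁, e₂, f₂, w, v` where `w² = -6` and `v² = -2p²`. -/
def gramL (p : ℕ) : Matrix (Fin 6) (Fin 6) ℤ :=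
  !![0, 1, 0, 0, 0, 0;
     1, 0, 0, 0, 0, 0;
     0, 0, 0, 1, 0, 0;
     0, 0, 1, 0, 0, 0;
     0, 0, 0, 0, -6, 0;
     0, 0, 0, 0, 0, -2 * (p : ℤ) ^ 2]

theorem dotProduct_gramL_mulVec (p : ℕ) (y x : Fin 6 → ℤ) :
    y ⬝ᵥ gramL p *ᵥ x = y 0 * x 1 + y 1 * x 0 + y 2 * x 3 + y 3 * x 2 - 6 * y 4 * x 4
      - 2 * p ^ 2 * y 5 * x 5 := by
  simp [gramL, dotProduct, mulVec, Fin.sum_univ_six]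
  ring

theorem stmt_18_general (p : ℕ) (k v₃ v₄ : ℤ)
    (hk : IsCoprime (2 * k + 1) (p : ℤ)) :
    -- the vector u = 2p·e₁ + 2p·v₃·e₂ + 2p·v₄·f₂ + p·w + (2k+1)·v
    (∀ c : ℤ, (∀ i : Fin 6,
        c ∣ ![2 * (p : ℤ), 0, 2 * (p : ℤ) * v₃, 2 * (p : ℤ) * v₄, (p : ℤ), 2 * k + 1] i) →
        IsUnit c) ∧
    (∀ x : Fin 6 → ℤ,
        (2 * (p : ℤ)) ∣
          ![2 * (p : ℤ), 0, 2 * (p : ℤ) * v₃, 2 * (p : ℤ) * v₄, (p : ℤ), 2 * k + 1] ⬝ᵥ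
            (gramL p).mulVec x) ∧
    (∃ x : Fin 6 → ℤ,
        ![2 * (p : ℤ), 0, 2 * (p : ℤ) * v₃, 2 * (p : ℤ) * v₄, (p : ℤ), 2 * k + 1] ⬝ᵥ
          (gramL p).mulVec x = 2 * (p : ℤ)) := by
  refine ⟨fun c hc => hk.isUnit_of_dvd' (hc 5) (hc 4), fun x => ?_, ⟨Pi.single 1 1, ?_⟩⟩
  · rw [dotProduct_gramL_mulVec]
    exact ⟨x 1 + v₃ * x 3 + v₄ * x 2 - 3 * x 4 - (2 * k + 1) * p * x 5, by
      simp only [Fin.isValue, cons_val_zero, cons_val_one, zero_mul, add_zero, cons_val]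
      ring⟩
  · rw [dotProduct_gramL_mulVec]
    simp

theorem stmt_18 (p : ℕ) (hp : p.Prime) (hp3 : 3 < p) (k v₃ v₄ : ℤ)
    (hk : IsCoprime (2 * k + 1) (p : ℤ)) :
    -- the vector u = 2p·e₁ + 2p·v₃·e₂ + 2p·v₄·f₂ + p·w + (2k+1)·v
    (∀ c : ℤ, (∀ i : Fin 6,
        c ∣ ![2 * (p : ℤ), 0, 2 * (p : ℤ) * v₃, 2 * (p : ℤ) * v₄, (p : ℤ), 2 * k + 1] i) →
        IsUnit c) ∧
    (∀ x : Fin 6 → ℤ,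
        (2 * (p : ℤ)) ∣
          ![2 * (p : ℤ), 0, 2 * (p : ℤ) * v₃, 2 * (p : ℤ) * v₄, (p : ℤ), 2 * k + 1] ⬝ᵥ
            (gramL p).mulVec x) ∧
    (∃ x : Fin 6 → ℤ,
        ![2 * (p : ℤ), 0, 2 * (p : ℤ) * v₃, 2 * (p : ℤ) * v₄, (p : ℤ), 2 * k + 1] ⬝ᵥ
          (gramL p).mulVec x = 2 * (p : ℤ)) :=
  stmt_18_general p k v₃ v₄ hk
end
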